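/- arXiv:1111.1229 — 2 statements merged into one kernel-verified Lean document; each statement's English description precedes it below -/
import Mathlib

section
/- Suppose c ≠ 0 and let M : [0,∞) → ℝ satisfy M(t)/t → 0 as t → ∞. Define u(t) = Σ_{n≥1} exp(−λ_n t + ∫_0^t [α(r(s)) − (1/2)β(r(s))²] ds + M(t)) c_n e_n for t ≥ 0. Then limsup_{t→∞} (1/t) log ‖u(t)‖ ≤ −(λ_1 − Σ_{j=1}^N π_j (α_j − (1/2)β_j²)), where λ_1 is the first (smallest) term of the nondecreasing sequence λ. In particular, ‖u(t)‖ converges exponentially to zero whenever λ_1 > Σ_{j=1}^N π_j (α_j − (1/2)β_j²). -/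
/-!
In the Hilbert basis, `‖u t‖` is squeezed between `exp (-λₙ t + D t) |cₙ|`, for any mode with
`cₙ ≠ 0`, and `exp (-λ₁ t + D t) ‖c‖`, where `D t = ∫₀ᵗ (α - β²/2)(r s) ds + M t`. Splitting the
integral by the state of `r`, the occupation averages give `D t / t → Σ πⱼ (αⱼ - βⱼ²/2)`, so both
bounds have exact exponential rates. The upper rate bounds the limsup of `(1/t) log ‖u t‖` and
gives the exponential decay; the lower one is needed only to keep that function bounded below,
without which the limsup in `ℝ` would be a junk value.
-/

open Filter MeasureTheory Real Topology

section SquareSummable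

variable {ι E F : Type*} [SeminormedAddGroup E] [SeminormedAddGroup F] {a : ι → E} {c : ι → F}
  {C : ℝ}

theorem norm_sq_le_of_norm_le (hac : ∀ i, ‖a i‖ ≤ C * ‖c i‖) (i : ι) :
    ‖a i‖ ^ 2 ≤ C ^ 2 * ‖c i‖ ^ 2 := by
  rw [← mul_pow]
  exact pow_le_pow_left₀ (norm_nonneg _) (hac i) 2

theorem summable_norm_sq_of_norm_le (hc : Summable fun i => ‖c i‖ ^ 2)
    (hac : ∀ i, ‖a i‖ ≤ C * ‖c i‖) : Summable fun i => ‖a i‖ ^ 2 :=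
  (hc.mul_left _).of_nonneg_of_le (fun _ => by positivity) (norm_sq_le_of_norm_le hac)

end SquareSummable

namespace HilbertBasis

variable {ι 𝕜 E : Type*} [RCLike 𝕜] [NormedAddCommGroup E] [InnerProductSpace 𝕜 E]
  (b : HilbertBasis ι 𝕜 E) {a c : ι → 𝕜} {C : ℝ}

theorem norm_tsum_smul_sq (ha : Summable fun i => ‖a i‖ ^ 2) :
    ‖∑' i, a i • b i‖ ^ 2 = ∑' i, ‖a i‖ ^ 2 := by
  let f : lp (fun _ : ι => 𝕜) 2 := ⟨a, memℓp_gen (by simpa using ha)⟩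
  rw [(b.hasSum_repr_symm f).tsum_eq, b.repr.symm.norm_map]
  exact_mod_cast lp.norm_rpow_eq_tsum (by norm_num) f

theorem norm_le_norm_tsum_smul (ha : Summable fun i => ‖a i‖ ^ 2) (i : ι) :
    ‖a i‖ ≤ ‖∑' j, a j • b j‖ := by
  refine (pow_le_pow_iff_left₀ (norm_nonneg _) (norm_nonneg _) two_ne_zero).1 ?_
  rw [b.norm_tsum_smul_sq ha]
  exact ha.le_tsum i fun j _ => by positivity

theorem norm_tsum_smul_le (hC : 0 ≤ C) (hc : Summable fun i => ‖c i‖ ^ 2)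
    (hac : ∀ i, ‖a i‖ ≤ C * ‖c i‖) :
    ‖∑' i, a i • b i‖ ≤ C * √(∑' i, ‖c i‖ ^ 2) := by
  have hsq := norm_sq_le_of_norm_le hac
  have ha := summable_norm_sq_of_norm_le hc hac
  rw [← sqrt_sq hC, ← sqrt_mul (sq_nonneg C), le_sqrt (norm_nonneg _) (by positivity),
    b.norm_tsum_smul_sq ha, ← tsum_mul_left]
  exact ha.tsum_le_tsum hsq (hc.mul_left _)

end HilbertBasis

section ExponentialModes

variable {H : Type*} [NormedAddCommGroup H] [InnerProductSpace ℝ H] (b : HilbertBasis ℕ ℝ H)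
  {lam c : ℕ → ℝ} {t : ℝ}

theorem norm_exp_mul_le (hlam : Monotone lam) (ht : 0 ≤ t) (e : ℝ) (n : ℕ) :
    ‖exp (-lam n * t + e) * c n‖ ≤ exp (-lam 0 * t + e) * ‖c n‖ := by
  rw [norm_mul, norm_of_nonneg (exp_pos _).le]
  gcongr
  exact hlam n.zero_le

theorem norm_tsum_exp_smul_le (hlam : Monotone lam) (hc : Summable fun n => c n ^ 2)
    (ht : 0 ≤ t) (e : ℝ) :
    ‖∑' n, (exp (-lam n * t + e) * c n) • b n‖ ≤ exp (-lam 0 * t + e) * √(∑' n, c n ^ 2) := by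
  simpa only [norm_eq_abs, sq_abs] using
    b.norm_tsum_smul_le (exp_pos _).le (by simpa only [norm_eq_abs, sq_abs] using hc)
      (norm_exp_mul_le hlam ht e)

theorem exp_mul_abs_le_norm_tsum_exp_smul (hlam : Monotone lam) (hc : Summable fun n => c n ^ 2)
    (ht : 0 ≤ t) (e : ℝ) (n : ℕ) :
    exp (-lam n * t + e) * |c n| ≤ ‖∑' n, (exp (-lam n * t + e) * c n) • b n‖ := by
  have ha := summable_norm_sq_of_norm_le (by simpa only [norm_eq_abs, sq_abs] using hc)
    (norm_exp_mul_le hlam ht e)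
  simpa only [norm_mul, norm_of_nonneg (exp_pos _).le, norm_eq_abs] using
    b.norm_le_norm_tsum_smul ha n

end ExponentialModes

section Occupation

variable {ι : Type*} [DecidableEq ι] [MeasurableSpace ι] [MeasurableSingletonClass ι]
  {r : ℝ → ι}

theorem intervalIntegrable_ite_eq (hr : Measurable r) (i : ι) (a b : ℝ) :
    IntervalIntegrable (fun s => if r s = i then (1 : ℝ) else 0) volume a b := by
  have h : (fun s => if r s = i then (1 : ℝ) else 0) = (r ⁻¹' {i}).indicator 1 := by
    funext s; by_cases h : r s = i <;> simp [h]
  rw [intervalIntegrable_iff, h]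
  exact (integrableOn_const measure_Ioc_lt_top.ne).indicator (hr (measurableSet_singleton i))

theorem integral_comp_eq_sum_mul_occupation [Fintype ι] (hr : Measurable r) (φ : ι → ℝ)
    (a b : ℝ) :
    ∫ s in a..b, φ (r s) = ∑ i, φ i * ∫ s in a..b, if r s = i then 1 else 0 := by
  have hφ (s : ℝ) : φ (r s) = ∑ i, φ i * if r s = i then 1 else 0 := by simp
  simp_rw [hφ, ← intervalIntegral.integral_const_mul]
  exact intervalIntegral.integral_finsetSum fun i _ =>
    (intervalIntegrable_ite_eq hr i a b).const_mul _

theorem tendsto_average_comp_of_occupation [Fintype ι] (hr : Measurable r) {p : ι → ℝ}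
    (hocc : ∀ i, Tendsto (fun t : ℝ => 1 / t * ∫ s in (0:ℝ)..t, if r s = i then (1:ℝ) else 0)
      atTop (𝓝 (p i)))
    (φ : ι → ℝ) :
    Tendsto (fun t : ℝ => 1 / t * ∫ s in (0:ℝ)..t, φ (r s)) atTop (𝓝 (∑ i, p i * φ i)) := by
  refine (tendsto_finsetSum _ fun i _ => (hocc i).mul_const (φ i)).congr fun t => ?_
  rw [integral_comp_eq_sum_mul_occupation hr, Finset.mul_sum]
  exact Finset.sum_congr rfl fun i _ => by ring

end Occupation

section ExponentialRate

variable {D : ℝ → ℝ} {L : ℝ}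

theorem tendsto_one_div_mul_log_exp_mul (hD : Tendsto (fun t => D t / t) atTop (𝓝 L)) (a : ℝ)
    {K : ℝ} (hK : K ≠ 0) :
    Tendsto (fun t => 1 / t * log (exp (a * t + D t) * K)) atTop (𝓝 (a + L)) := by
  have h := (tendsto_const_nhds (x := a)).add hD |>.add
    ((tendsto_const_nhds (x := log K)).div_atTop tendsto_id)
  rw [add_zero] at h
  refine h.congr' ?_
  filter_upwards [eventually_gt_atTop 0] with t ht
  rw [log_mul (exp_ne_zero _) hK, log_exp, id]
  field_simp

theorem limsup_one_div_mul_log_le {x : ℝ → ℝ} (hD : Tendsto (fun t => D t / t) atTop (𝓝 L))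
    {a a' k K : ℝ} (hk : 0 < k) (hK : 0 < K)
    (hlow : ∀ᶠ t in atTop, exp (a' * t + D t) * k ≤ x t)
    (hup : ∀ᶠ t in atTop, x t ≤ exp (a * t + D t) * K) :
    limsup (fun t => 1 / t * log (x t)) atTop ≤ a + L := by
  have hlow' : ∀ᶠ t in atTop, 1 / t * log (exp (a' * t + D t) * k) ≤ 1 / t * log (x t) := by
    filter_upwards [hlow, eventually_gt_atTop 0] with t h ht
    exact mul_le_mul_of_nonneg_left (log_le_log (by positivity) h) (by positivity)
  have hup' : ∀ᶠ t in atTop, 1 / t * log (x t) ≤ 1 / t * log (exp (a * t + D t) * K) := by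
    filter_upwards [hlow, hup, eventually_gt_atTop 0] with t h₁ h₂ ht
    have hx : 0 < x t := (mul_pos (exp_pos _) hk).trans_le h₁
    exact mul_le_mul_of_nonneg_left (log_le_log hx h₂) (by positivity)
  have hU := tendsto_one_div_mul_log_exp_mul hD a hK.ne'
  have hbdd := (tendsto_one_div_mul_log_exp_mul hD a' hk.ne').isBoundedUnder_ge.mono_ge hlow'
  calc limsup (fun t => 1 / t * log (x t)) atTop
      ≤ limsup (fun t => 1 / t * log (exp (a * t + D t) * K)) atTop :=
        limsup_le_limsup hup' hbdd.isCoboundedUnder_le hU.isBoundedUnder_le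
    _ = a + L := hU.limsup_eq

theorem exists_exp_decay_of_le {x : ℝ → ℝ} (hD : Tendsto (fun t => D t / t) atTop (𝓝 L))
    {a K : ℝ} (hneg : a + L < 0) (hK : 0 ≤ K)
    (hup : ∀ᶠ t in atTop, x t ≤ exp (a * t + D t) * K) :
    ∃ γ > (0:ℝ), ∃ C : ℝ, ∀ᶠ t in atTop, x t ≤ C * exp (-γ * t) := by
  refine ⟨-(a + L) / 2, by linarith, K, ?_⟩
  have hL : L < L - (a + L) / 2 := by linarith
  filter_upwards [hup, hD.eventually (gt_mem_nhds hL), eventually_gt_atTop 0] with t h hDt ht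
  rw [div_lt_iff₀ ht] at hDt
  calc x t ≤ exp (a * t + D t) * K := h
    _ ≤ K * exp (-(-(a + L) / 2) * t) := by
        rw [mul_comm]; gcongr; nlinarith

end ExponentialRate

theorem sample_lyapunov_upper_bound_hybrid_general
    {H : Type*} [NormedAddCommGroup H] [InnerProductSpace ℝ H]
    (b : HilbertBasis ℕ ℝ H)
    (lam : ℕ → ℝ) (hlam : Monotone lam)
    (c : ℕ → ℝ) (hc : Summable (fun n => c n ^ 2)) (hc0 : c ≠ 0)
    {N : ℕ} (r : ℝ → Fin N) (hr : Measurable r)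
    (α β : Fin N → ℝ)
    (pp : Fin N → ℝ)
    (hocc : ∀ i, Tendsto
      (fun t : ℝ => (1 / t) * ∫ s in (0:ℝ)..t, (if r s = i then (1:ℝ) else 0))
      atTop (nhds (pp i)))
    (M : ℝ → ℝ) (hM : Tendsto (fun t : ℝ => M t / t) atTop (nhds 0))
    (u : ℝ → H)
    (hu : ∀ t : ℝ, u t =
      ∑' n : ℕ, (Real.exp (-lam n * t +
        (∫ s in (0:ℝ)..t, (α (r s) - (1 / 2) * β (r s) ^ 2)) + M t) * c n) • (b n : H)) :
    limsup (fun t : ℝ => (1 / t) * Real.log ‖u t‖) atTop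
        ≤ -(lam 0 - ∑ j, pp j * (α j - (1 / 2) * β j ^ 2)) ∧
    (∑ j, pp j * (α j - (1 / 2) * β j ^ 2) < lam 0 →
      ∃ γ > (0:ℝ), ∃ C : ℝ, ∀ᶠ t in atTop, ‖u t‖ ≤ C * Real.exp (-γ * t)) := by
  set D : ℝ → ℝ := fun t => (∫ s in (0:ℝ)..t, (α (r s) - (1 / 2) * β (r s) ^ 2)) + M t
  have hD : Tendsto (fun t => D t / t) atTop (𝓝 (∑ j, pp j * (α j - (1 / 2) * β j ^ 2))) := by
    have h := (tendsto_average_comp_of_occupation hr hocc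
      fun j => α j - (1 / 2) * β j ^ 2).add hM
    rw [add_zero] at h
    exact h.congr fun t => by simp only [D]; ring
  have hu' (t : ℝ) : u t = ∑' n, (exp (-lam n * t + D t) * c n) • b n := by
    simp only [hu, D, add_assoc]
  obtain ⟨n₀, hn₀⟩ : ∃ n, c n ≠ 0 := by
    by_contra! h
    exact hc0 (funext h)
  have hK : 0 < √(∑' n, c n ^ 2) :=
    sqrt_pos.2 (hc.tsum_pos (fun n => sq_nonneg _) n₀ (by positivity))
  have hup : ∀ᶠ t in atTop, ‖u t‖ ≤ exp (-lam 0 * t + D t) * √(∑' n, c n ^ 2) := by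
    filter_upwards [eventually_ge_atTop 0] with t ht
    rw [hu']
    exact norm_tsum_exp_smul_le b hlam hc ht _
  have hlow : ∀ᶠ t in atTop, exp (-lam n₀ * t + D t) * |c n₀| ≤ ‖u t‖ := by
    filter_upwards [eventually_ge_atTop 0] with t ht
    rw [hu']
    exact exp_mul_abs_le_norm_tsum_exp_smul b hlam hc ht _ n₀
  refine ⟨?_, fun hS => exists_exp_decay_of_le hD (by linarith) hK.le hup⟩
  exact (limsup_one_div_mul_log_le hD (abs_pos.2 hn₀) hK hlow hup).trans_eq (by ring)

/-- for any square-summable `c ≠ 0` and `M(t)/t → 0`,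
`limsup_{t→∞} (1/t) log ‖u(t)‖ ≤ −(λ_1 − Σ_j π_j (α_j − β_j²/2))` (with `λ_1 = lam 0` the
first term of the nondecreasing sequence), and `‖u(t)‖` converges exponentially to zero
whenever `λ_1 > Σ_j π_j (α_j − β_j²/2)`. -/
theorem sample_lyapunov_upper_bound_hybrid
    {H : Type*} [NormedAddCommGroup H] [InnerProductSpace ℝ H] [CompleteSpace H]
    (b : HilbertBasis ℕ ℝ H)
    (lam : ℕ → ℝ) (hlam : Monotone lam)
    (c : ℕ → ℝ) (hc : Summable (fun n => c n ^ 2)) (hc0 : c ≠ 0)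
    {N : ℕ} (r : ℝ → Fin N) (hr : Measurable r)
    (α β : Fin N → ℝ)
    (pp : Fin N → ℝ) (hpp : ∀ i, 0 ≤ pp i) (hppsum : ∑ i, pp i = 1)
    (hocc : ∀ i, Tendsto
      (fun t : ℝ => (1 / t) * ∫ s in (0:ℝ)..t, (if r s = i then (1:ℝ) else 0))
      atTop (nhds (pp i)))
    (M : ℝ → ℝ) (hM : Tendsto (fun t : ℝ => M t / t) atTop (nhds 0))
    (u : ℝ → H)
    (hu : ∀ t : ℝ, u t =
      ∑' n : ℕ, (Real.exp (-lam n * t +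
        (∫ s in (0:ℝ)..t, (α (r s) - (1 / 2) * β (r s) ^ 2)) + M t) * c n) • (b n : H)) :
    limsup (fun t : ℝ => (1 / t) * Real.log ‖u t‖) atTop
        ≤ -(lam 0 - ∑ j, pp j * (α j - (1 / 2) * β j ^ 2)) ∧
    (∑ j, pp j * (α j - (1 / 2) * β j ^ 2) < lam 0 →
      ∃ γ > (0:ℝ), ∃ C : ℝ, ∀ᶠ t in atTop, ‖u t‖ ≤ C * Real.exp (-γ * t)) :=
  sample_lyapunov_upper_bound_hybrid_general b lam hlam c hc hc0 r hr α β pp hocc M hM u hu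
end

section
/- Let p > 0, suppose c ≠ 0, and let n₀ be the smallest index n with c_n ≠ 0. Define v(t) = Σ_{n≥1} exp(−λ_n t + ∫_0^t α(r(s)) ds) c_n e_n, ξ(t) = exp((p(p−1)/2) ∫_0^t β(r(s))² ds), and g(i) = p α_i + (p(p−1)/2) β_i² for i ∈ S. Then for every t ≥ 0, |c_{n₀}|^p · exp(−p λ_{n₀} t + ∫_0^t g(r(s)) ds) ≤ ‖v(t)‖^p · ξ(t) ≤ ‖c‖^p · exp(−p λ_{n₀} t + ∫_0^t g(r(s)) ds). -/
/-! The coefficients of `v t` in the basis `b` are `w n * c n` with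
`w n = exp (-λ_n t + ∫_0^t α(r s) ds)`. Since `λ` is nondecreasing and `t ≥ 0`, the weights are
largest at `n₀`, below which `c` vanishes, so Parseval's identity squeezes `‖v t‖²` between
`(w n₀ * c n₀)²` and `(w n₀)² ‖c‖²`. Raising to the power `p / 2` and multiplying by `ξ t`,
the exponentials `(w n₀)^p` and `ξ t` combine into `exp (-p λ_{n₀} t + ∫_0^t g(r s) ds)`. -/

open MeasureTheory

lemma intervalIntegrable_comp_of_finite {ι : Type*} [Finite ι] [MeasurableSpace ι]
    [MeasurableSingletonClass ι] {r : ℝ → ι} (hr : Measurable r) (φ : ι → ℝ)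
    {μ : Measure ℝ} [IsLocallyFiniteMeasure μ] (a b : ℝ) :
    IntervalIntegrable (fun s => φ (r s)) μ a b := by
  obtain ⟨C, hC⟩ := Finite.bddAbove_range fun i => ‖φ i‖
  exact (intervalIntegrable_const (c := C)).mono_fun'
    ((measurable_of_finite φ).comp hr).aestronglyMeasurable
    (ae_of_all _ fun s => hC ⟨r s, rfl⟩)

theorem HilbertBasis.norm_tsum_smul_sq_s7 {ι 𝕜 E : Type*} [RCLike 𝕜] [NormedAddCommGroup E]
    [InnerProductSpace 𝕜 E] (b : HilbertBasis ι 𝕜 E) {a : ι → 𝕜}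
    (ha : Summable fun i => ‖a i‖ ^ 2) :
    ‖∑' i, a i • b i‖ ^ 2 = ∑' i, ‖a i‖ ^ 2 := by
  let f : lp (fun _ : ι => 𝕜) 2 := ⟨a, memℓp_gen (by simpa using ha)⟩
  rw [(b.hasSum_repr_symm f).tsum_eq, b.repr.symm.norm_map]
  simpa using lp.norm_rpow_eq_tsum (p := 2) (by norm_num) f

section WeightedExpansion

variable {H : Type*} [NormedAddCommGroup H] [InnerProductSpace ℝ H] (b : HilbertBasis ℕ ℝ H)
  {w c : ℕ → ℝ} {n₀ : ℕ}

lemma sq_mul_le_of_eq_zero_of_lt (hw : ∀ n, n₀ ≤ n → |w n| ≤ |w n₀|)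
    (hc₀ : ∀ m, m < n₀ → c m = 0) (n : ℕ) :
    (w n * c n) ^ 2 ≤ w n₀ ^ 2 * c n ^ 2 := by
  rcases lt_or_ge n n₀ with h | h
  · simp [hc₀ n h]
  · rw [mul_pow]
    exact mul_le_mul_of_nonneg_right (sq_le_sq.mpr (hw n h)) (sq_nonneg _)

variable (hw : ∀ n, n₀ ≤ n → |w n| ≤ |w n₀|) (hc₀ : ∀ m, m < n₀ → c m = 0)
  (hc : Summable fun n => c n ^ 2)

include hw hc₀ hc

lemma summable_sq_mul_of_eq_zero_of_lt : Summable fun n => (w n * c n) ^ 2 :=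
  .of_nonneg_of_le (fun _ => sq_nonneg _) (sq_mul_le_of_eq_zero_of_lt hw hc₀) (hc.mul_left _)

lemma HilbertBasis.norm_tsum_mul_smul_sq :
    ‖∑' n, (w n * c n) • b n‖ ^ 2 = ∑' n, (w n * c n) ^ 2 := by
  simpa only [Real.norm_eq_abs, sq_abs] using b.norm_tsum_smul_sq_s7 (a := fun n => w n * c n)
    (by simpa only [Real.norm_eq_abs, sq_abs] using summable_sq_mul_of_eq_zero_of_lt hw hc₀ hc)

lemma HilbertBasis.abs_mul_abs_le_norm_tsum_mul_smul :
    |w n₀| * |c n₀| ≤ ‖∑' n, (w n * c n) • b n‖ := by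
  refine (pow_le_pow_iff_left₀ (by positivity) (norm_nonneg _) two_ne_zero).mp ?_
  rw [b.norm_tsum_mul_smul_sq hw hc₀ hc, ← abs_mul, sq_abs]
  exact (summable_sq_mul_of_eq_zero_of_lt hw hc₀ hc).le_tsum n₀ fun _ _ => sq_nonneg _

lemma HilbertBasis.norm_tsum_mul_smul_le :
    ‖∑' n, (w n * c n) • b n‖ ≤ |w n₀| * √(∑' n, c n ^ 2) := by
  refine (pow_le_pow_iff_left₀ (norm_nonneg _) (by positivity) two_ne_zero).mp ?_
  rw [b.norm_tsum_mul_smul_sq hw hc₀ hc, mul_pow, sq_abs,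
    Real.sq_sqrt (tsum_nonneg fun _ => sq_nonneg _), ← tsum_mul_left]
  exact (summable_sq_mul_of_eq_zero_of_lt hw hc₀ hc).tsum_le_tsum
    (sq_mul_le_of_eq_zero_of_lt hw hc₀) (hc.mul_left _)

end WeightedExpansion
theorem pth_moment_pathwise_bound_general
    {H : Type*} [NormedAddCommGroup H] [InnerProductSpace ℝ H]
    (b : HilbertBasis ℕ ℝ H)
    (lam : ℕ → ℝ) (hlam : Monotone lam)
    (c : ℕ → ℝ) (hc : Summable (fun n => c n ^ 2))
    (n₀ : ℕ) (hn₀min : ∀ m, m < n₀ → c m = 0)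
    {N : ℕ} (r : ℝ → Fin N) (hr : Measurable r)
    (α β : Fin N → ℝ)
    (p : ℝ) (hp : 0 < p)
    (v : ℝ → H)
    (hv : ∀ t : ℝ, v t =
      ∑' n : ℕ, (Real.exp (-lam n * t + ∫ s in (0:ℝ)..t, α (r s)) * c n) • (b n : H))
    (ξ : ℝ → ℝ)
    (hξ : ∀ t : ℝ, ξ t = Real.exp (p * (p - 1) / 2 * ∫ s in (0:ℝ)..t, β (r s) ^ 2)) :
    ∀ t : ℝ, 0 ≤ t →
      |c n₀| ^ p *
          Real.exp (-(p * lam n₀) * t +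
            ∫ s in (0:ℝ)..t, (p * α (r s) + p * (p - 1) / 2 * β (r s) ^ 2))
        ≤ ‖v t‖ ^ p * ξ t ∧
      ‖v t‖ ^ p * ξ t
        ≤ Real.sqrt (∑' n : ℕ, c n ^ 2) ^ p *
            Real.exp (-(p * lam n₀) * t +
              ∫ s in (0:ℝ)..t, (p * α (r s) + p * (p - 1) / 2 * β (r s) ^ 2)) := by
  intro t ht
  set w : ℕ → ℝ := fun n => Real.exp (-lam n * t + ∫ s in (0:ℝ)..t, α (r s))
  have hw : ∀ n, n₀ ≤ n → |w n| ≤ |w n₀| := fun n hn => by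
    simp only [w, Real.abs_exp]
    gcongr
    exact hlam hn
  have hlow := b.abs_mul_abs_le_norm_tsum_mul_smul hw hn₀min hc
  have hup := b.norm_tsum_mul_smul_le hw hn₀min hc
  rw [← hv, abs_of_pos (Real.exp_pos _)] at hlow hup
  have hexp : w n₀ ^ p * ξ t = Real.exp (-(p * lam n₀) * t +
      ∫ s in (0:ℝ)..t, (p * α (r s) + p * (p - 1) / 2 * β (r s) ^ 2)) := by
    rw [intervalIntegral.integral_add
        ((intervalIntegrable_comp_of_finite hr α 0 t).const_mul p)
        ((intervalIntegrable_comp_of_finite hr (fun i => β i ^ 2) 0 t).const_mul _),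
      intervalIntegral.integral_const_mul, intervalIntegral.integral_const_mul, hξ,
      ← Real.exp_mul, ← Real.exp_add]
    ring_nf
  have hξ_nonneg : 0 ≤ ξ t := by rw [hξ]; positivity
  rw [← hexp]
  constructor
  · calc |c n₀| ^ p * (w n₀ ^ p * ξ t) = (w n₀ * |c n₀|) ^ p * ξ t := by
          rw [Real.mul_rpow (Real.exp_pos _).le (abs_nonneg _)]; ring
      _ ≤ ‖v t‖ ^ p * ξ t := by gcongr
  · calc ‖v t‖ ^ p * ξ t ≤ (w n₀ * √(∑' n, c n ^ 2)) ^ p * ξ t := by gcongr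
      _ = √(∑' n, c n ^ 2) ^ p * (w n₀ ^ p * ξ t) := by
          rw [Real.mul_rpow (Real.exp_pos _).le (Real.sqrt_nonneg _)]; ring

/-- pathwise two-sided bound for `‖v(t)‖^p ξ(t)`: with
`g(i) = p α_i + (p(p−1)/2) β_i²`,
`|c_{n₀}|^p exp(−pλ_{n₀}t + ∫_0^t g(r(s))ds) ≤ ‖v(t)‖^p ξ(t) ≤ ‖c‖^p exp(−pλ_{n₀}t + ∫_0^t g(r(s))ds)`. -/
theorem pth_moment_pathwise_bound
    {H : Type*} [NormedAddCommGroup H] [InnerProductSpace ℝ H] [CompleteSpace H]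
    (b : HilbertBasis ℕ ℝ H)
    (lam : ℕ → ℝ) (hlam : Monotone lam)
    (c : ℕ → ℝ) (hc : Summable (fun n => c n ^ 2)) (hc0 : c ≠ 0)
    (n₀ : ℕ) (hn₀ : c n₀ ≠ 0) (hn₀min : ∀ m, m < n₀ → c m = 0)
    {N : ℕ} (r : ℝ → Fin N) (hr : Measurable r)
    (α β : Fin N → ℝ)
    (p : ℝ) (hp : 0 < p)
    (v : ℝ → H)
    (hv : ∀ t : ℝ, v t =
      ∑' n : ℕ, (Real.exp (-lam n * t + ∫ s in (0:ℝ)..t, α (r s)) * c n) • (b n : H))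
    (ξ : ℝ → ℝ)
    (hξ : ∀ t : ℝ, ξ t = Real.exp (p * (p - 1) / 2 * ∫ s in (0:ℝ)..t, β (r s) ^ 2)) :
    ∀ t : ℝ, 0 ≤ t →
      |c n₀| ^ p *
          Real.exp (-(p * lam n₀) * t +
            ∫ s in (0:ℝ)..t, (p * α (r s) + p * (p - 1) / 2 * β (r s) ^ 2))
        ≤ ‖v t‖ ^ p * ξ t ∧
      ‖v t‖ ^ p * ξ t
        ≤ Real.sqrt (∑' n : ℕ, c n ^ 2) ^ p *
            Real.exp (-(p * lam n₀) * t +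
              ∫ s in (0:ℝ)..t, (p * α (r s) + p * (p - 1) / 2 * β (r s) ^ 2)) :=
  pth_moment_pathwise_bound_general b lam hlam c hc n₀ hn₀min r hr α β p hp v hv ξ hξ
end
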